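/- arXiv:2605.01842 — 3 statements merged into one kernel-verified Lean document; each statement's English description precedes it below -/
import Mathlib

section
/- Fix 0 < α < 1/2 and b > 0. There exist C > 0 and A₀ > 0 such that the function V(s) = α·log|s| - Im(s^α) satisfies |V(x+iy) - (α log x - α y x^{α-1})| ≤ C x^{-2} for all x > A₀ and |y| < b. -/
/-
Write s = x + iy = r e^{iθ}. Then V(s) = α log r - r^α sin(αθ) and y = r sin θ, so
  V(s) - (α log x - α y x^{α-1})
    = α (log r - log x) + r^α (α sin θ - sin(αθ)) + α y (x^{α-1} - r^{α-1}).
Since r - x = y²/(r + x) ≤ y²/(2x), the first and last terms are O((r - x)/x) = O(y²/x²) and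
O(|y|³/x²). The cubic bound |u - sin u| ≤ |u|³/6 makes the middle one O(r |θ|³), which is
O(|y|³/x²) because |θ| ≤ |tan θ| = |y|/x.
-/

open Complex

noncomputable def V (α x y : ℝ) : ℝ :=
  α * Real.log ‖(x : ℂ) + y * Complex.I‖ -
    (((x : ℂ) + y * Complex.I) ^ (α : ℂ)).im

lemma Real.abs_mul_sin_sub_sin_mul_le {α : ℝ} (hα0 : 0 ≤ α) (hα1 : α ≤ 1) (θ : ℝ) :
    |α * Real.sin θ - Real.sin (θ * α)| ≤ |θ| ^ 3 / 3 := by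
  calc |α * Real.sin θ - Real.sin (θ * α)|
      = |(θ * α - Real.sin (θ * α)) - α * (θ - Real.sin θ)| := by ring_nf
    _ ≤ |θ * α - Real.sin (θ * α)| + |α * (θ - Real.sin θ)| := abs_sub _ _
    _ = |θ * α - Real.sin (θ * α)| + α * |θ - Real.sin θ| := by rw [abs_mul, abs_of_nonneg hα0]
    _ ≤ |θ| ^ 3 / 6 + 1 * (|θ| ^ 3 / 6) := by
      gcongr
      · refine (Real.abs_sub_sin_le _).trans ?_
        rw [abs_mul, abs_of_nonneg hα0]
        gcongr
        exact mul_le_of_le_one_right (abs_nonneg θ) hα1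
      · exact Real.abs_sub_sin_le θ
    _ = |θ| ^ 3 / 3 := by ring

lemma Complex.abs_arg_le_abs_im_div_re {z : ℂ} (hz : 0 < z.re) : |arg z| ≤ |z.im| / z.re := by
  have hlt : |arg z| < Real.pi / 2 := abs_arg_lt_pi_div_two_iff.mpr (Or.inl hz)
  rw [← abs_of_pos hz, ← abs_div, ← tan_arg]
  rcases le_total 0 (arg z) with h | h
  · rw [abs_of_nonneg h] at hlt ⊢
    exact (Real.le_tan h hlt).trans (le_abs_self _)
  · rw [abs_of_nonpos h] at hlt ⊢
    exact (Real.le_tan (neg_nonneg.mpr h) hlt).trans (by rw [Real.tan_neg]; exact neg_le_abs _)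

lemma Complex.norm_sub_re_le {z : ℂ} (hz : 0 < z.re) : ‖z‖ - z.re ≤ z.im ^ 2 / (2 * z.re) := by
  rw [le_div_iff₀ (by positivity)]
  nlinarith [re_le_norm z, sq_norm_sub_sq_re z]

lemma Real.rpow_sub_rpow_le_mul_sub_div {x r p : ℝ} (hx : 0 < x) (hxr : x ≤ r) (hp : -1 ≤ p) :
    x ^ p - r ^ p ≤ x ^ p * (r - x) / r := by
  have hr : 0 < r := hx.trans_le hxr
  have hmono : x ^ (p + 1) ≤ r ^ (p + 1) := by gcongr; linarith
  rw [Real.rpow_add hx, Real.rpow_add hr, Real.rpow_one, Real.rpow_one] at hmono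
  rw [le_div_iff₀ hr]
  nlinarith

lemma abs_V_sub_le_polar {α x y : ℝ} (hα0 : 0 ≤ α) (hα1 : α ≤ 1) (hx : 1 ≤ x) :
    |V α x y - (α * Real.log x - α * y * x ^ (α - 1))| ≤
      (1 + |y|) * ((‖(x : ℂ) + y * I‖ - x) / x) +
        ‖(x : ℂ) + y * I‖ * |arg ((x : ℂ) + y * I)| ^ 3 / 3 := by
  set z : ℂ := x + y * I
  have hre : z.re = x := by simp [z]
  have hx0 : 0 < x := by linarith
  set r := ‖z‖
  set θ := arg z
  have hxr : x ≤ r := hre ▸ re_le_norm z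
  have hr0 : 0 < r := hx0.trans_le hxr
  have hsplit : V α x y - (α * Real.log x - α * y * x ^ (α - 1)) =
      α * (Real.log r - Real.log x) + r ^ α * (α * Real.sin θ - Real.sin (θ * α)) +
        α * y * (x ^ (α - 1) - r ^ (α - 1)) := by
    have hV : V α x y = α * Real.log r - r ^ α * Real.sin (θ * α) := by rw [V, cpow_ofReal_im]
    have hsin : Real.sin θ = y / r := by rw [sin_arg, show z.im = y by simp [z]]
    rw [hV, hsin, Real.rpow_sub_one hr0.ne']
    ring
  have hlog : |α * (Real.log r - Real.log x)| ≤ (r - x) / x := by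
    have hnn : 0 ≤ Real.log r - Real.log x := sub_nonneg.mpr (Real.log_le_log hx0 hxr)
    rw [abs_of_nonneg (mul_nonneg hα0 hnn)]
    calc α * (Real.log r - Real.log x) ≤ 1 * (Real.log r - Real.log x) := by gcongr
      _ = Real.log (r / x) := by rw [one_mul, Real.log_div hr0.ne' hx0.ne']
      _ ≤ (r - x) / x := by
        rw [sub_div, div_self hx0.ne']; exact Real.log_le_sub_one_of_pos (div_pos hr0 hx0)
  have hsine : |r ^ α * (α * Real.sin θ - Real.sin (θ * α))| ≤ r * |θ| ^ 3 / 3 := by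
    rw [abs_mul, abs_of_pos (Real.rpow_pos_of_pos hr0 α), mul_div_assoc]
    gcongr
    · exact Real.rpow_le_self_of_one_le (hx.trans hxr) hα1
    · exact Real.abs_mul_sin_sub_sin_mul_le hα0 hα1 θ
  have hpow : |α * y * (x ^ (α - 1) - r ^ (α - 1))| ≤ |y| * ((r - x) / x) := by
    have hnn : 0 ≤ x ^ (α - 1) - r ^ (α - 1) :=
      sub_nonneg.mpr (Real.rpow_le_rpow_of_nonpos hx0 hxr (by linarith))
    rw [abs_mul, abs_mul, abs_of_nonneg hα0, abs_of_nonneg hnn, mul_comm α]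
    calc |y| * α * (x ^ (α - 1) - r ^ (α - 1)) ≤ |y| * 1 * (x ^ (α - 1) * (r - x) / r) := by
          gcongr; exact Real.rpow_sub_rpow_le_mul_sub_div hx0 hxr (by linarith)
      _ ≤ |y| * 1 * (1 * (r - x) / x) := by
          gcongr
          exact Real.rpow_le_one_of_one_le_of_nonpos hx (by linarith)
      _ = |y| * ((r - x) / x) := by ring
  rw [hsplit]
  calc _ ≤ _ := abs_add_three _ _ _
    _ ≤ (r - x) / x + r * |θ| ^ 3 / 3 + |y| * ((r - x) / x) := by gcongr
    _ = _ := by ring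

lemma abs_V_sub_le {α x y : ℝ} (hα0 : 0 ≤ α) (hα1 : α ≤ 1) (hx : 1 ≤ x) (hyx : |y| ≤ x) :
    |V α x y - (α * Real.log x - α * y * x ^ (α - 1))| ≤ (y ^ 2 + 2 * |y| ^ 3) / x ^ 2 := by
  set z : ℂ := x + y * I
  have hre : z.re = x := by simp [z]
  have him : z.im = y := by simp [z]
  have hx0 : 0 < x := by linarith
  have hr2x : ‖z‖ ≤ 2 * x := by
    have := norm_le_abs_re_add_abs_im z
    rw [hre, him, abs_of_pos hx0] at this
    linarith
  have hδ : (‖z‖ - x) / x ≤ y ^ 2 / 2 / x ^ 2 := by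
    have := norm_sub_re_le (z := z) (hre ▸ hx0)
    rw [hre, him] at this
    rw [div_le_iff₀ hx0]
    calc ‖z‖ - x ≤ y ^ 2 / (2 * x) := this
      _ = y ^ 2 / 2 / x ^ 2 * x := by field_simp
  have hθ : |arg z| ≤ |y| / x := hre ▸ him ▸ abs_arg_le_abs_im_div_re (hre ▸ hx0)
  calc _ ≤ (1 + |y|) * (y ^ 2 / 2 / x ^ 2) + 2 * x * (|y| / x) ^ 3 / 3 := by
        refine (abs_V_sub_le_polar hα0 hα1 hx).trans ?_
        gcongr
    _ = (y ^ 2 / 2 + |y| ^ 3 * (1 / 2 + 2 / 3)) / x ^ 2 := by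
        rw [← sq_abs y]; field_simp; ring
    _ ≤ (y ^ 2 + 2 * |y| ^ 3) / x ^ 2 := by
        gcongr ?_ / _
        linarith [sq_nonneg y, pow_nonneg (abs_nonneg y) 3]

theorem stmt6 (α b : ℝ) (hα0 : 0 < α) (hα : α < 1/2) (hb : 0 < b) :
    ∃ C > 0, ∃ A₀ > 0, ∀ x y : ℝ, A₀ < x → |y| < b →
      |V α x y - (α * Real.log x - α * y * x ^ (α - 1))| ≤ C * x ^ (-(2:ℝ)) := by
  refine ⟨b ^ 2 + 2 * b ^ 3, by positivity, 1 + b, by positivity, fun x y hx hy => ?_⟩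
  have hx0 : 0 < x := by linarith
  calc _ ≤ (y ^ 2 + 2 * |y| ^ 3) / x ^ 2 :=
        abs_V_sub_le hα0.le (by linarith) (by linarith) (by linarith)
    _ ≤ (b ^ 2 + 2 * b ^ 3) / x ^ 2 := by
      rw [← sq_abs y]
      gcongr
    _ = (b ^ 2 + 2 * b ^ 3) * x ^ (-(2:ℝ)) := by
      rw [Real.rpow_neg hx0.le, Real.rpow_two, div_eq_mul_inv]
end

section
/- For ε > 0 and A sufficiently large (so that S(z) = A - Log(1-z) maps the unit disk into a right half-plane where Log Log is defined), the function h(z) = Ψ(S(z)) + iε·Log(Log(S(z))) on the unit disk is unbounded: along the radius z = r ∈ (0,1), S(r) = A - log(1-r) → +∞ as r → 1⁻, hence Im h(r) → +∞, while Ψ(S(r)) → 0 when Ψ(s) = s^{-α} e^{-i s^α} with 0 < α < 1/2. -/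
open Complex

noncomputable def Psi (α : ℝ) (s : ℂ) : ℂ :=
  s ^ (-(α : ℂ)) * Complex.exp (-Complex.I * s ^ (α : ℂ))

noncomputable def S (A : ℝ) (z : ℂ) : ℂ := (A : ℂ) - Complex.log (1 - z)

noncomputable def h (α A ε : ℝ) (z : ℂ) : ℂ :=
  Psi α (S A z) + Complex.I * ε * Complex.log (Complex.log (S A z))

/-! On the radius, `S A r = A - log (1 - r)` is real and tends to `+∞` as `r → 1⁻`. For real
`x ≥ 1`, `|Ψ(x)| = x ^ (-α) → 0` and `Im (i ε Log (Log x)) = ε log (log x) → +∞`, so `Im h(r) → +∞`,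
which rules out a bound on the disk. -/

open Filter Topology

lemma S_ofReal (A : ℝ) {r : ℝ} (hr : r ≤ 1) :
    S A r = ((A - Real.log (1 - r) : ℝ) : ℂ) := by
  rw [S, ← ofReal_one, ← ofReal_sub, ← ofReal_log (by linarith)]
  push_cast
  ring

lemma tendsto_sub_log_one_sub_nhdsLT (A : ℝ) :
    Tendsto (fun r : ℝ => A - Real.log (1 - r)) (𝓝[<] 1) atTop := by
  have h_one_sub : Tendsto (fun r : ℝ => 1 - r) (𝓝[<] 1) (𝓝[>] 0) := by
    refine tendsto_nhdsWithin_of_tendsto_nhds_of_eventually_within _ ?_ ?_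
    · exact tendsto_nhdsWithin_of_tendsto_nhds
        (by simpa using (tendsto_id (x := 𝓝 (1 : ℝ))).const_sub 1)
    · filter_upwards [self_mem_nhdsWithin] with r hr
      exact sub_pos.mpr (Set.mem_Iio.mp hr)
  exact tendsto_atTop_add_const_left _ A
    (tendsto_neg_atBot_atTop.comp (Real.tendsto_log_nhdsGT_zero.comp h_one_sub))

lemma norm_Psi_ofReal (α : ℝ) {x : ℝ} (hx : 0 < x) : ‖Psi α x‖ = x ^ (-α) := by
  rw [Psi, norm_mul, norm_cpow_eq_rpow_re_of_pos hx, norm_exp, ← ofReal_cpow hx.le]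
  simp

lemma tendsto_Psi_ofReal_atTop {α : ℝ} (hα : 0 < α) :
    Tendsto (fun x : ℝ => Psi α x) atTop (𝓝 0) := by
  rw [tendsto_zero_iff_norm_tendsto_zero]
  refine (tendsto_rpow_neg_atTop hα).congr' ?_
  filter_upwards [eventually_gt_atTop 0] with x hx
  rw [norm_Psi_ofReal α hx]

lemma im_h_of_S_eq_ofReal (α A ε : ℝ) {z : ℂ} {x : ℝ} (hx : 1 ≤ x) (hS : S A z = x) :
    (h α A ε z).im = (Psi α x).im + ε * Real.log (Real.log x) := by
  have hlog : 0 ≤ Real.log x := Real.log_nonneg hx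
  rw [h, hS, ← ofReal_log (by linarith), ← ofReal_log hlog]
  simp [mul_im]

lemma not_bounded_on_ball_of_tendsto_im {f : ℂ → ℂ}
    (hf : Tendsto (fun r : ℝ => (f r).im) (𝓝[<] 1) atTop) :
    ¬ ∃ M : ℝ, ∀ z : ℂ, ‖z‖ < 1 → ‖f z‖ ≤ M := by
  rintro ⟨M, hM⟩
  obtain ⟨r, hr, hrM⟩ :=
    (Filter.Eventually.and (Ioo_mem_nhdsLT zero_lt_one) (hf.eventually_gt_atTop M)).exists
  have hr_norm : ‖(r : ℂ)‖ < 1 := by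
    rw [norm_real, Real.norm_of_nonneg hr.1.le]
    exact hr.2
  linarith [hM _ hr_norm, (le_abs_self _).trans (abs_im_le_norm (f r))]

theorem stmt16_general (α ε : ℝ) (hα0 : 0 < α) (hε : 0 < ε) :
    ∃ A₀ : ℝ, ∀ A : ℝ, A₀ ≤ A →
      Filter.Tendsto (fun r : ℝ => (S A (r : ℂ)).re)
        (nhdsWithin 1 (Set.Ioo (0:ℝ) 1)) Filter.atTop ∧
      Filter.Tendsto (fun r : ℝ => Psi α (S A (r : ℂ)))
        (nhdsWithin 1 (Set.Ioo (0:ℝ) 1)) (nhds 0) ∧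
      Filter.Tendsto (fun r : ℝ => (h α A ε (r : ℂ)).im)
        (nhdsWithin 1 (Set.Ioo (0:ℝ) 1)) Filter.atTop ∧
      ¬ ∃ M : ℝ, ∀ z : ℂ, ‖z‖ < 1 → ‖h α A ε z‖ ≤ M := by
  refine ⟨0, fun A _ => ?_⟩
  have hS := tendsto_sub_log_one_sub_nhdsLT A
  have hS_real : ∀ᶠ r : ℝ in 𝓝[<] 1, S A r = ((A - Real.log (1 - r) : ℝ) : ℂ) := by
    filter_upwards [self_mem_nhdsWithin] with r hr using S_ofReal A (le_of_lt hr)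
  have h_re : Tendsto (fun r : ℝ => (S A r).re) (𝓝[<] 1) atTop :=
    hS.congr' (by filter_upwards [hS_real] with r hr; rw [hr, ofReal_re])
  have h_Psi : Tendsto (fun r : ℝ => Psi α (S A r)) (𝓝[<] 1) (𝓝 0) :=
    ((tendsto_Psi_ofReal_atTop hα0).comp hS).congr'
      (by filter_upwards [hS_real] with r hr; rw [hr]; rfl)
  have h_im : Tendsto (fun r : ℝ => (h α A ε r).im) (𝓝[<] 1) atTop := by
    have h_loglog :=
      (Real.tendsto_log_atTop.comp (Real.tendsto_log_atTop.comp hS)).const_mul_atTop hε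
    refine ((continuous_im.tendsto 0).comp h_Psi |>.add_atTop h_loglog).congr' ?_
    filter_upwards [hS_real, hS.eventually_ge_atTop 1] with r hr hr1
    rw [im_h_of_S_eq_ofReal α A ε hr1 hr, ← hr]
    rfl
  have h_le : 𝓝[Set.Ioo (0 : ℝ) 1] 1 ≤ 𝓝[<] 1 := nhdsWithin_mono _ Set.Ioo_subset_Iio_self
  exact ⟨h_re.mono_left h_le, h_Psi.mono_left h_le, h_im.mono_left h_le,
    not_bounded_on_ball_of_tendsto_im h_im⟩

theorem stmt16 (α ε : ℝ) (hα0 : 0 < α) (hα : α < 1/2) (hε : 0 < ε) :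
    ∃ A₀ : ℝ, ∀ A : ℝ, A₀ ≤ A →
      Filter.Tendsto (fun r : ℝ => (S A (r : ℂ)).re)
        (nhdsWithin 1 (Set.Ioo (0:ℝ) 1)) Filter.atTop ∧
      Filter.Tendsto (fun r : ℝ => Psi α (S A (r : ℂ)))
        (nhdsWithin 1 (Set.Ioo (0:ℝ) 1)) (nhds 0) ∧
      Filter.Tendsto (fun r : ℝ => (h α A ε (r : ℂ)).im)
        (nhdsWithin 1 (Set.Ioo (0:ℝ) 1)) Filter.atTop ∧
      ¬ ∃ M : ℝ, ∀ z : ℂ, ‖z‖ < 1 → ‖h α A ε z‖ ≤ M :=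
  stmt16_general α ε hα0 hε
end

section
/- Fix 0 < k < 1. There exists a bounded, globally injective, sense-preserving harmonic mapping f = h + conj(g) of the open unit disk into ℂ, with h, g holomorphic on 𝔻, such that |g'(z)| ≤ k |h'(z)| for all z ∈ 𝔻, yet h is unbounded on 𝔻. -/
/-!
Put `ζ(z) = 100 - log (1 - z)`, which maps the disk into the half-strip `Re w ≥ 99, |Im w| ≤ 2`,
and `τ = ψ ∘ ζ` with `ψ(w) = log w + 10 i / w`. There `Im ψ(w) ≍ 1 / Re w` and
`Re ψ(w) = log (Re w) + O(1)`, so `0 ≤ Im τ ≤ 1/2` and two values of `τ` at the same height have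
real parts less than `2π` apart: `exp (i τ)` is injective on the disk.

Let `h = exp (i τ) + c τ` and `g = -c τ` with `c = k / 4`. Then `f = exp (i τ) + 2 i c Im τ` is
bounded, while `h` is not, since `Re τ = log ζ → ∞` along `[0, 1)`. As
`|exp (i τ)| = exp (-Im τ) ≥ 1/2`, `h' = τ' (i exp (i τ) + c)` dominates `g' = -c τ'`.
If `f z₁ = f z₂`, comparing the moduli of the `exp (i τ)` terms forces `Im τ z₁ = Im τ z₂`,
because `t ↦ exp (-t)` changes faster than `2 c t` for `t ≤ 1/2`; then
`exp (i τ z₁) = exp (i τ z₂)`.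
-/

open Complex Metric

namespace UnboundedAnalyticPart

open ComplexConjugate
open scoped Real

theorem exp_mul_abs_sub_le_abs_exp_sub {x y m : ℝ} (hx : m ≤ x) (hy : m ≤ y) :
    Real.exp m * |x - y| ≤ |Real.exp x - Real.exp y| := by
  wlog hxy : x ≤ y generalizing x y
  · rw [abs_sub_comm x, abs_sub_comm (Real.exp x)]
    exact this hy hx (le_of_not_ge hxy)
  have hexp : Real.exp y - Real.exp x = Real.exp x * (Real.exp (y - x) - 1) := by
    rw [mul_sub, ← Real.exp_add]; ring_nf
  rw [abs_sub_comm, abs_of_nonneg (sub_nonneg.2 hxy), abs_sub_comm,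
    abs_of_nonneg (sub_nonneg.2 (Real.exp_le_exp.2 hxy)), hexp]
  calc Real.exp m * (y - x) ≤ Real.exp x * (y - x) := by gcongr
    _ ≤ Real.exp x * (Real.exp (y - x) - 1) :=
      mul_le_mul_of_nonneg_left (by linarith [Real.add_one_le_exp (y - x)]) (Real.exp_pos x).le

theorem norm_exp_I_mul (w : ℂ) : ‖exp (I * w)‖ = Real.exp (-w.im) := by
  simp [norm_exp]

theorem injOn_log_add_div {c : ℂ} {R : ℝ} (hc : 2 * ‖c‖ < R) :
    Set.InjOn (fun w => log w + c / w) {w | R ≤ ‖w‖} := by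
  intro w₁ hw₁ w₂ hw₂ heq
  simp only [Set.mem_ofPred_eq] at hw₁ hw₂ heq
  have hR : 0 < R := lt_of_le_of_lt (by positivity) hc
  have hw₁0 : w₁ ≠ 0 := norm_pos_iff.1 (hR.trans_le hw₁)
  have hw₂0 : w₂ ≠ 0 := norm_pos_iff.1 (hR.trans_le hw₂)
  set L := log w₁ - log w₂ with hL
  have hw₁L : w₁ = w₂ * exp L := by
    rw [hL, exp_sub, exp_log hw₁0, exp_log hw₂0]; field_simp
  have hLdiff : L = c / w₂ - c / w₁ := by linear_combination heq
  -- `L` is a fixed point of a map contracting by the factor `2 ‖c‖ / R`.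
  have hLc : L = c * (exp L - 1) / w₁ := hLdiff.trans (by rw [hw₁L]; field_simp)
  have hinv : ∀ w : ℂ, R ≤ ‖w‖ → ‖c / w‖ ≤ ‖c‖ / R := fun w hw => by
    rw [norm_div]; gcongr
  have hL1 : ‖L‖ ≤ 1 := calc
    ‖L‖ ≤ ‖c‖ / R + ‖c‖ / R := by
      rw [hLdiff]; exact (norm_sub_le _ _).trans (add_le_add (hinv w₂ hw₂) (hinv w₁ hw₁))
    _ ≤ 1 := by rw [← add_div, div_le_one hR]; linarith
  have hcontr : ‖L‖ ≤ 2 * ‖c‖ / R * ‖L‖ := calc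
    ‖L‖ = ‖c‖ * ‖exp L - 1‖ / ‖w₁‖ := by conv_lhs => rw [hLc, norm_div, norm_mul]
    _ ≤ ‖c‖ * (2 * ‖L‖) / R := by gcongr; exact norm_exp_sub_one_le hL1
    _ = 2 * ‖c‖ / R * ‖L‖ := by ring
  have hL0 : L = 0 := by
    have : 2 * ‖c‖ / R < 1 := by rw [div_lt_one hR]; exact hc
    exact norm_eq_zero.1 (by nlinarith [norm_nonneg L])
  rw [hw₁L, hL0, exp_zero, mul_one]

noncomputable def analyticPart (c : ℝ) (φ : ℂ → ℂ) (z : ℂ) : ℂ := exp (I * φ z) + c * φ z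

def coanalyticPart (c : ℝ) (φ : ℂ → ℂ) (z : ℂ) : ℂ := -(c * φ z)

section HarmonicMap

variable {c b k : ℝ} {φ : ℂ → ℂ} {φ' z : ℂ} {s : Set ℂ}

theorem analyticPart_add_conj_coanalyticPart :
    analyticPart c φ z + conj (coanalyticPart c φ z) =
      exp (I * φ z) + (2 * c * (φ z).im : ℝ) * I := by
  rw [analyticPart, coanalyticPart, map_neg, map_mul, conj_ofReal]
  have h := sub_conj (φ z)
  push_cast at h ⊢
  linear_combination (c : ℂ) * h

theorem norm_analyticPart_add_conj_coanalyticPart_le (h0 : 0 ≤ (φ z).im) (hb : (φ z).im ≤ b) :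
    ‖analyticPart c φ z + conj (coanalyticPart c φ z)‖ ≤ 1 + 2 * |c| * b := by
  rw [analyticPart_add_conj_coanalyticPart]
  refine (norm_add_le _ _).trans (add_le_add ?_ ?_)
  · rw [norm_exp_I_mul, Real.exp_le_one_iff]; linarith
  · rw [norm_mul, norm_I, mul_one, norm_real, Real.norm_eq_abs, abs_mul, abs_mul, abs_two,
      abs_of_nonneg h0]
    gcongr

theorem injOn_analyticPart_add_conj_coanalyticPart (hc : 2 * |c| < Real.exp (-b))
    (hb : ∀ z ∈ s, (φ z).im ≤ b) (hinj : Set.InjOn (fun z => exp (I * φ z)) s) :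
    Set.InjOn (fun z => analyticPart c φ z + conj (coanalyticPart c φ z)) s := by
  intro z₁ hz₁ z₂ hz₂ heq
  simp only [analyticPart_add_conj_coanalyticPart] at heq
  have hdiff : exp (I * φ z₁) - exp (I * φ z₂) = (2 * c * ((φ z₂).im - (φ z₁).im) : ℝ) * I := by
    push_cast at heq ⊢; linear_combination heq
  have hgap : Real.exp (-b) * |(φ z₁).im - (φ z₂).im| ≤ 2 * |c| * |(φ z₁).im - (φ z₂).im| := calc
    _ = Real.exp (-b) * |-(φ z₁).im - -(φ z₂).im| := by rw [neg_sub_neg, abs_sub_comm]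
    _ ≤ |Real.exp (-(φ z₁).im) - Real.exp (-(φ z₂).im)| :=
      exp_mul_abs_sub_le_abs_exp_sub (by linarith [hb z₁ hz₁]) (by linarith [hb z₂ hz₂])
    _ ≤ ‖exp (I * φ z₁) - exp (I * φ z₂)‖ := by
      rw [← norm_exp_I_mul, ← norm_exp_I_mul]; exact abs_norm_sub_norm_le _ _
    _ = 2 * |c| * |(φ z₁).im - (φ z₂).im| := by
      rw [hdiff, norm_mul, norm_I, mul_one, norm_real, Real.norm_eq_abs, abs_mul, abs_mul, abs_two,
        abs_sub_comm]
  have him : (φ z₁).im = (φ z₂).im := by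
    by_contra hne
    have := abs_pos.2 (sub_ne_zero.2 hne)
    nlinarith
  refine hinj hz₁ hz₂ (sub_eq_zero.1 ?_)
  rw [hdiff, him, sub_self, mul_zero, ofReal_zero, zero_mul]

theorem hasDerivAt_analyticPart (hφ : HasDerivAt φ φ' z) :
    HasDerivAt (analyticPart c φ) (φ' * (I * exp (I * φ z) + c)) z :=
  (((hφ.const_mul I).cexp).add (hφ.const_mul (c : ℂ))).congr_deriv (by ring)

theorem hasDerivAt_coanalyticPart (hφ : HasDerivAt φ φ' z) :
    HasDerivAt (coanalyticPart c φ) (-(c * φ')) z :=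
  (hφ.const_mul (c : ℂ)).neg

theorem sub_abs_le_norm_I_mul_exp_add (hb : (φ z).im ≤ b) :
    Real.exp (-b) - |c| ≤ ‖I * exp (I * φ z) + c‖ := calc
  Real.exp (-b) - |c| ≤ ‖I * exp (I * φ z)‖ - ‖(c : ℂ)‖ := by
    rw [norm_mul, norm_I, one_mul, norm_exp_I_mul, norm_real, Real.norm_eq_abs]
    gcongr
  _ ≤ ‖I * exp (I * φ z) + c‖ := norm_sub_le_norm_add _ _

theorem norm_deriv_coanalyticPart_le (hφ : HasDerivAt φ φ' z) (hb : (φ z).im ≤ b) (hk : 0 ≤ k)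
    (hck : |c| ≤ k * (Real.exp (-b) - |c|)) :
    ‖deriv (coanalyticPart c φ) z‖ ≤ k * ‖deriv (analyticPart c φ) z‖ := by
  rw [(hasDerivAt_coanalyticPart hφ).deriv, (hasDerivAt_analyticPart hφ).deriv, norm_neg,
    norm_mul, norm_mul, norm_real, Real.norm_eq_abs]
  calc |c| * ‖φ'‖ ≤ k * (Real.exp (-b) - |c|) * ‖φ'‖ := by gcongr
    _ ≤ k * (‖φ'‖ * ‖I * exp (I * φ z) + c‖) := by
      rw [mul_comm ‖φ'‖, ← mul_assoc]; gcongr; exact sub_abs_le_norm_I_mul_exp_add hb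

theorem deriv_analyticPart_ne_zero (hφ : HasDerivAt φ φ' z) (hφ' : φ' ≠ 0) (hb : (φ z).im ≤ b)
    (hc : |c| < Real.exp (-b)) : deriv (analyticPart c φ) z ≠ 0 := by
  rw [(hasDerivAt_analyticPart hφ).deriv]
  refine mul_ne_zero hφ' (norm_pos_iff.1 ?_)
  linarith [sub_abs_le_norm_I_mul_exp_add (c := c) hb]

theorem not_bounded_analyticPart (hc : c ≠ 0) (h0 : ∀ z ∈ s, 0 ≤ (φ z).im)
    (hφ : ¬ ∃ M : ℝ, ∀ z ∈ s, ‖φ z‖ ≤ M) : ¬ ∃ M : ℝ, ∀ z ∈ s, ‖analyticPart c φ z‖ ≤ M := by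
  rintro ⟨M, hM⟩
  refine hφ ⟨(M + 1) / |c|, fun z hz => ?_⟩
  rw [le_div_iff₀ (abs_pos.2 hc)]
  calc ‖φ z‖ * |c| = ‖analyticPart c φ z - exp (I * φ z)‖ := by
        rw [analyticPart, add_sub_cancel_left, norm_mul, norm_real, Real.norm_eq_abs, mul_comm]
    _ ≤ ‖analyticPart c φ z‖ + ‖exp (I * φ z)‖ := norm_sub_le _ _
    _ ≤ M + 1 := by
      rw [norm_exp_I_mul]
      exact add_le_add (hM z hz) (Real.exp_le_one_iff.2 (by linarith [h0 z hz]))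

end HarmonicMap

theorem abs_arg_le_abs_im_div_re {w : ℂ} (hw : 0 < w.re) : |arg w| ≤ |w.im| / w.re := by
  have harg := abs_lt.1 (abs_arg_lt_pi_div_two_iff.2 (Or.inl hw))
  rcases le_total 0 (arg w) with h | h
  · calc |arg w| = arg w := abs_of_nonneg h
      _ ≤ Real.tan (arg w) := Real.le_tan h harg.2
      _ ≤ |w.im| / w.re := by rw [tan_arg]; gcongr; exact le_abs_self _
  · calc |arg w| = -arg w := abs_of_nonpos h
      _ ≤ Real.tan (-arg w) := Real.le_tan (neg_nonneg.2 h) (by linarith)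
      _ ≤ |w.im| / w.re := by rw [Real.tan_neg, tan_arg, ← neg_div]; gcongr; exact neg_le_abs _

noncomputable def zeta (z : ℂ) : ℂ := 100 - log (1 - z)

noncomputable def psi (w : ℂ) : ℂ := log w + 10 * I / w

noncomputable def tau (z : ℂ) : ℂ := psi (zeta z)

def halfStrip : Set ℂ := {w | 99 ≤ w.re ∧ |w.im| ≤ 2}

section Zeta

variable {z : ℂ}

theorem re_one_sub_pos (hz : z ∈ ball (0 : ℂ) 1) : 0 < (1 - z).re := by
  rw [mem_ball_zero_iff] at hz
  rw [sub_re, one_re]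
  linarith [re_le_norm z]

theorem mapsTo_zeta : Set.MapsTo zeta (ball 0 1) halfStrip := by
  intro z hz
  have hre := re_one_sub_pos hz
  have hnorm : ‖1 - z‖ < 2 := by
    rw [mem_ball_zero_iff] at hz
    linarith [norm_sub_le (1 : ℂ) z, norm_one (α := ℂ)]
  constructor
  · rw [zeta, sub_re, log_re]
    have := Real.log_le_sub_one_of_pos (hre.trans_le (re_le_norm _))
    rw [re_ofNat]
    linarith
  · rw [zeta, sub_im, log_im, im_ofNat, zero_sub, abs_neg]
    linarith [abs_arg_le_pi_div_two_iff.2 hre.le, Real.pi_le_four]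

theorem injOn_zeta : Set.InjOn zeta (ball 0 1) := by
  intro z₁ hz₁ z₂ hz₂ heq
  have hlog : log (1 - z₁) = log (1 - z₂) := by
    simpa only [zeta, sub_right_inj] using heq
  have := congrArg exp hlog
  rw [exp_log (ne_zero_of_re_pos (re_one_sub_pos hz₁)),
    exp_log (ne_zero_of_re_pos (re_one_sub_pos hz₂))] at this
  simpa using this

theorem hasDerivAt_zeta (hz : z ∈ ball (0 : ℂ) 1) : HasDerivAt zeta (1 - z)⁻¹ z :=
  (((hasDerivAt_log (Or.inl (re_one_sub_pos hz))).comp z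
    ((hasDerivAt_id z).const_sub 1)).const_sub 100).congr_deriv (by simp)

theorem exists_zeta_eq {t : ℝ} (ht : 100 ≤ t) : ∃ z ∈ ball (0 : ℂ) 1, zeta z = t := by
  have hexp : 0 < Real.exp (100 - t) := Real.exp_pos _
  have hexp1 : Real.exp (100 - t) ≤ 1 := Real.exp_le_one_iff.2 (by linarith)
  refine ⟨(1 - Real.exp (100 - t) : ℝ), ?_, ?_⟩
  · rw [mem_ball_zero_iff, norm_real, Real.norm_eq_abs, abs_lt]
    constructor <;> linarith
  · rw [zeta, ofReal_sub, ofReal_one, sub_sub_cancel, ← ofReal_log hexp.le, Real.log_exp]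
    push_cast; ring

end Zeta

section Psi

variable {w w₁ w₂ : ℂ}

theorem re_psi (w : ℂ) : (psi w).re = Real.log ‖w‖ + 10 * w.im / normSq w := by
  simp [psi, div_re, log_re]

theorem im_psi (w : ℂ) : (psi w).im = arg w + 10 * w.re / normSq w := by
  simp [psi, div_im, log_im]

theorem im_psi_mul_re_mem (hw : w ∈ halfStrip) : (psi w).im * w.re ∈ Set.Icc 7 12 := by
  obtain ⟨hre, him⟩ := hw
  have hre0 : 0 < w.re := by linarith
  have harg : |arg w * w.re| ≤ 2 := by
    rw [abs_mul, abs_of_pos hre0, ← le_div_iff₀ hre0]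
    exact (abs_arg_le_abs_im_div_re hre0).trans (by gcongr)
  have him2 : w.im ^ 2 ≤ 4 := by nlinarith [sq_abs w.im, abs_nonneg w.im]
  have hq : 10 * w.re / normSq w * w.re ∈ Set.Icc 9 10 := by
    have hns : 0 < normSq w := by rw [normSq_apply]; nlinarith
    rw [div_mul_eq_mul_div, Set.mem_Icc, le_div_iff₀ hns, div_le_iff₀ hns, normSq_apply]
    constructor <;> nlinarith
  rw [im_psi, add_mul]
  constructor <;> linarith [abs_le.1 harg, hq.1, hq.2]

theorem im_psi_mem (hw : w ∈ halfStrip) : (psi w).im ∈ Set.Icc 0 (1 / 2) := by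
  have h := im_psi_mul_re_mem hw
  have hre : 99 ≤ w.re := hw.1
  constructor <;> nlinarith [h.1, h.2]

theorem abs_re_psi_sub_log_re_le (hw : w ∈ halfStrip) : |(psi w).re - Real.log w.re| ≤ 1 := by
  obtain ⟨hre, him⟩ := hw
  have hre0 : 0 < w.re := by linarith
  have hnorm : ‖w‖ ≤ w.re + 2 := by
    linarith [norm_le_abs_re_add_abs_im w, abs_of_pos hre0]
  have hlog : Real.log ‖w‖ - Real.log w.re ∈ Set.Icc 0 (1 / 2) := by
    rw [← Real.log_div (norm_pos_iff.2 (ne_zero_of_re_pos hre0)).ne' hre0.ne']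
    have hratio : 1 ≤ ‖w‖ / w.re := (one_le_div hre0).2 (re_le_norm w)
    refine ⟨Real.log_nonneg hratio, (Real.log_le_sub_one_of_pos (by linarith)).trans ?_⟩
    rw [sub_le_iff_le_add, div_le_iff₀ hre0]
    linarith
  have hcorr : |10 * w.im / normSq w| ≤ 1 / 2 := by
    have hns : 99 ^ 2 ≤ normSq w := by rw [normSq_apply]; nlinarith [mul_self_nonneg w.im]
    rw [abs_div, abs_mul, abs_of_pos (by norm_num : (0 : ℝ) < 10),
      abs_of_pos (show 0 < normSq w by linarith), div_le_iff₀ (by linarith)]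
    linarith
  rw [re_psi, abs_le]
  rw [abs_le] at hcorr
  constructor <;> linarith [hlog.1, hlog.2]

theorem log_re_sub_log_re_le_of_im_psi_eq (hw₁ : w₁ ∈ halfStrip) (hw₂ : w₂ ∈ halfStrip)
    (him : (psi w₁).im = (psi w₂).im) : Real.log w₂.re - Real.log w₁.re ≤ 1 := by
  have h₁ := im_psi_mul_re_mem hw₁
  have h₂ := im_psi_mul_re_mem hw₂
  have hr₁ : 0 < w₁.re := by linarith [hw₁.1]
  have hr₂ : 0 < w₂.re := by linarith [hw₂.1]
  rw [him] at h₁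
  have hd : 0 < (psi w₂).im := pos_of_mul_pos_left (by linarith [h₂.1]) hr₂.le
  have hratio : 7 * w₂.re ≤ 12 * w₁.re := by
    refine le_of_mul_le_mul_left ?_ hd
    nlinarith [h₁.1, h₂.2]
  rw [← Real.log_div hr₂.ne' hr₁.ne']
  refine (Real.log_le_sub_one_of_pos (div_pos hr₂ hr₁)).trans ?_
  rw [sub_le_iff_le_add, div_le_iff₀ hr₁]
  linarith

theorem abs_re_psi_sub_lt_of_im_eq (hw₁ : w₁ ∈ halfStrip) (hw₂ : w₂ ∈ halfStrip)
    (him : (psi w₁).im = (psi w₂).im) : |(psi w₁).re - (psi w₂).re| < 2 * π := by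
  have h₁ := abs_le.1 (abs_re_psi_sub_log_re_le hw₁)
  have h₂ := abs_le.1 (abs_re_psi_sub_log_re_le hw₂)
  have h₁₂ := log_re_sub_log_re_le_of_im_psi_eq hw₁ hw₂ him
  have h₂₁ := log_re_sub_log_re_le_of_im_psi_eq hw₂ hw₁ him.symm
  rw [abs_lt]
  constructor <;> linarith [Real.pi_gt_three]

theorem injOn_psi : Set.InjOn psi halfStrip :=
  (injOn_log_add_div (c := 10 * I) (R := 99)
    (by simp only [norm_mul, norm_ofNat, norm_I, mul_one]; norm_num)).mono
    fun w hw => hw.1.trans (re_le_norm w)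

theorem injOn_exp_I_mul_psi : Set.InjOn (fun w => exp (I * psi w)) halfStrip := by
  intro w₁ hw₁ w₂ hw₂ heq
  obtain ⟨n, hn⟩ := exp_eq_exp_iff_exists_int.1 heq
  have hshift : psi w₁ = psi w₂ + (2 * π * n : ℝ) := by
    refine mul_left_cancel₀ I_ne_zero ?_
    push_cast
    linear_combination hn
  have him : (psi w₁).im = (psi w₂).im := by simp [hshift]
  have hre := abs_re_psi_sub_lt_of_im_eq hw₁ hw₂ him
  rw [hshift, add_re, ofReal_re, add_sub_cancel_left, abs_mul, abs_of_pos Real.two_pi_pos,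
    mul_lt_iff_lt_one_right Real.two_pi_pos] at hre
  have hn0 : n = 0 := by
    rw [← Int.cast_abs, ← Int.cast_one, Int.cast_lt] at hre
    exact Int.abs_lt_one_iff.1 hre
  exact injOn_psi hw₁ hw₂ (by simpa [hn0] using hshift)

theorem hasDerivAt_psi (hw : w ∈ slitPlane) : HasDerivAt psi ((w - 10 * I) / w ^ 2) w := by
  have hw0 : w ≠ 0 := slitPlane_ne_zero hw
  exact ((hasDerivAt_log hw).add
    ((hasDerivAt_const w (10 * I)).div (hasDerivAt_id w) hw0)).congr_deriv
    (by simp only [id]; field_simp; ring)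

theorem log_le_norm_psi {t : ℝ} (ht : 0 < t) : Real.log t ≤ ‖psi t‖ := by
  calc Real.log t = (psi t).re := by simp [re_psi, abs_of_pos ht]
    _ ≤ ‖psi t‖ := re_le_norm _

end Psi

section Tau

variable {z : ℂ}

theorem hasDerivAt_tau (hz : z ∈ ball (0 : ℂ) 1) :
    HasDerivAt tau ((zeta z - 10 * I) / zeta z ^ 2 * (1 - z)⁻¹) z :=
  (hasDerivAt_psi (Or.inl (by linarith [(mapsTo_zeta hz).1]))).comp z (hasDerivAt_zeta hz)

theorem deriv_tau_ne_zero (hz : z ∈ ball (0 : ℂ) 1) : deriv tau z ≠ 0 := by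
  have hre : 99 ≤ (zeta z).re := (mapsTo_zeta hz).1
  rw [(hasDerivAt_tau hz).deriv]
  refine mul_ne_zero (div_ne_zero ?_ (pow_ne_zero 2 (ne_zero_of_re_pos (by linarith))))
    (inv_ne_zero (ne_zero_of_re_pos (re_one_sub_pos hz)))
  intro h
  have := congrArg re h
  simp only [sub_re, mul_re, re_ofNat, I_re, mul_zero, im_ofNat, I_im, mul_one, sub_self, sub_zero,
    zero_re] at this
  linarith

theorem im_tau_mem (hz : z ∈ ball (0 : ℂ) 1) : (tau z).im ∈ Set.Icc 0 (1 / 2) :=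
  im_psi_mem (mapsTo_zeta hz)

theorem injOn_exp_I_mul_tau : Set.InjOn (fun z => exp (I * tau z)) (ball 0 1) :=
  injOn_exp_I_mul_psi.comp injOn_zeta mapsTo_zeta

theorem not_bounded_tau : ¬ ∃ M : ℝ, ∀ z ∈ ball (0 : ℂ) 1, ‖tau z‖ ≤ M := by
  rintro ⟨M, hM⟩
  set t := max 100 (Real.exp (M + 1))
  obtain ⟨z, hz, hzt⟩ := exists_zeta_eq (le_max_left 100 (Real.exp (M + 1)))
  have hlog : M + 1 ≤ Real.log t := (Real.le_log_iff_exp_le (by positivity)).2 (le_max_right _ _)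
  have hnorm : Real.log t ≤ ‖tau z‖ := by
    rw [tau, hzt]; exact log_le_norm_psi (by positivity)
  linarith [hM z hz]

end Tau

end UnboundedAnalyticPart

open UnboundedAnalyticPart in
theorem stmt19 (k : ℝ) (hk0 : 0 < k) (hk1 : k < 1) :
    ∃ h g : ℂ → ℂ,
      DifferentiableOn ℂ h (ball (0:ℂ) 1) ∧
      DifferentiableOn ℂ g (ball (0:ℂ) 1) ∧
      (∃ M : ℝ, ∀ z ∈ ball (0:ℂ) 1,
        ‖h z + (starRingEnd ℂ) (g z)‖ ≤ M) ∧
      Set.InjOn (fun z => h z + (starRingEnd ℂ) (g z)) (ball (0:ℂ) 1) ∧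
      (∀ z ∈ ball (0:ℂ) 1,
        ‖deriv g z‖ ≤ k * ‖deriv h z‖) ∧
      (∀ z ∈ ball (0:ℂ) 1, deriv h z ≠ 0) ∧
      ¬ ∃ M : ℝ, ∀ z ∈ ball (0:ℂ) 1, ‖h z‖ ≤ M := by
  have hexp : 1 / 2 ≤ Real.exp (-(1 / 2)) := by linarith [Real.add_one_le_exp (-(1 / 2))]
  have hc : |k / 4| = k / 4 := abs_of_pos (by positivity)
  have hτ : ∀ z ∈ ball (0 : ℂ) 1, HasDerivAt tau (deriv tau z) z :=
    fun z hz => (hasDerivAt_tau hz).differentiableAt.hasDerivAt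
  refine ⟨analyticPart (k / 4) tau, coanalyticPart (k / 4) tau, fun z hz => ?_, fun z hz => ?_,
    ⟨1 + 2 * |k / 4| * (1 / 2), fun z hz => ?_⟩, ?_, fun z hz => ?_, fun z hz => ?_, ?_⟩
  · exact (hasDerivAt_analyticPart (hτ z hz)).differentiableAt.differentiableWithinAt
  · exact (hasDerivAt_coanalyticPart (hτ z hz)).differentiableAt.differentiableWithinAt
  · exact norm_analyticPart_add_conj_coanalyticPart_le (im_tau_mem hz).1 (im_tau_mem hz).2
  · exact injOn_analyticPart_add_conj_coanalyticPart (by rw [hc]; linarith)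
      (fun z hz => (im_tau_mem hz).2) injOn_exp_I_mul_tau
  · exact norm_deriv_coanalyticPart_le (hτ z hz) (im_tau_mem hz).2 hk0.le (by rw [hc]; nlinarith)
  · exact deriv_analyticPart_ne_zero (hτ z hz) (deriv_tau_ne_zero hz) (im_tau_mem hz).2
      (by rw [hc]; linarith)
  · exact not_bounded_analyticPart (by positivity) (fun z hz => (im_tau_mem hz).1) not_bounded_tau
end
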